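/- arXiv:1406.1613 — 4 statements merged into one kernel-verified Lean document; each statement's English description precedes it below -/
import Mathlib

section
/- Green's function identity for the initial value problem at 0: let Λ ∈ ℂ with Re(Λ) > 1/2, let g and w be continuous functions on the real interval [0, a] (a > 0), and suppose w satisfies the integral equation w(z) = (1/(2Λ-1)) ∫₀^z [1 - (t/z)^{2Λ-1}] g(t) dt for all z ∈ (0, a], with w(0) = 0. Then w is twice differentiable on (0, a] and satisfies z w''(z) + 2Λ w'(z) = g(z) there. -/
/-!
After splitting the kernel, `(t / z) ^ ν = z ^ (-ν) * t ^ ν`, the Volterra operator becomes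
`ν⁻¹ (A z - z ^ (-ν) B z)` with `A = ∫₀^z g` and `B = ∫₀^z t ^ ν g`. Differentiating, the `A'` and
`B'` contributions cancel and `w' = z ^ (-ν-1) B`; differentiating once more gives
`z w'' = g - (ν + 1) w'`, which is the equation since `ν + 1 = 2Λ`. Continuity of `t ^ ν` at `0`
(from `Re ν > 0`) is what makes `B` a `C¹` primitive. To apply the fundamental theorem of calculus
globally, `g` is first extended continuously from `[0, a]` to `ℝ`.
-/

open Set

noncomputable def greenVolterra (ν : ℂ) (g : ℝ → ℂ) (z : ℝ) : ℂ :=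
  (1 / ν) * ∫ t in (0 : ℝ)..z, (1 - ((t / z : ℝ) : ℂ) ^ ν) * g t

noncomputable def greenVolterraDeriv (ν : ℂ) (g : ℝ → ℂ) (z : ℝ) : ℂ :=
  (z : ℂ) ^ (-ν - 1) * ∫ t in (0 : ℝ)..z, (t : ℂ) ^ ν * g t

theorem Complex.ofReal_div_cpow_of_nonneg {t z : ℝ} (ht : 0 ≤ t) (hz : 0 ≤ z) (ν : ℂ) :
    ((t / z : ℝ) : ℂ) ^ ν = (t : ℂ) ^ ν / (z : ℂ) ^ ν := by
  have harg : (z : ℂ).arg ≠ Real.pi := by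
    rw [Complex.arg_ofReal_of_nonneg hz]; exact Real.pi_ne_zero.symm
  rw [div_eq_mul_inv, Complex.ofReal_mul, Complex.mul_cpow_ofReal_nonneg ht (inv_nonneg.2 hz),
    Complex.ofReal_inv, Complex.inv_cpow _ _ harg, div_eq_mul_inv]

theorem greenVolterra_congr {ν : ℂ} {f g : ℝ → ℂ} {z : ℝ} (hz : 0 ≤ z)
    (hfg : EqOn f g (Icc 0 z)) : greenVolterra ν f z = greenVolterra ν g z := by
  unfold greenVolterra
  congr 1
  refine intervalIntegral.integral_congr fun t ht => ?_
  rw [uIcc_of_le hz] at ht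
  simp only [hfg ht]

theorem hasDerivAt_ofReal_cpow_of_pos {z : ℝ} (hz : 0 < z) (d : ℂ) :
    HasDerivAt (fun y : ℝ => (y : ℂ) ^ d) (d * (z : ℂ) ^ (d - 1)) z :=
  (Complex.hasStrictDerivAt_cpow_const (Complex.ofReal_mem_slitPlane.2 hz)).hasDerivAt.comp_ofReal

section

variable {ν : ℂ} {g : ℝ → ℂ}

theorem continuous_ofReal_cpow_const_mul (hν : 0 < ν.re) (hg : Continuous g) :
    Continuous fun t : ℝ => (t : ℂ) ^ ν * g t :=
  (Complex.continuous_ofReal_cpow_const hν).mul hg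

theorem greenVolterra_eq (hν : 0 < ν.re) (hg : Continuous g) {z : ℝ} (hz : 0 ≤ z) :
    greenVolterra ν g z = (1 / ν) * ((∫ t in (0 : ℝ)..z, g t)
      - (z : ℂ) ^ (-ν) * ∫ t in (0 : ℝ)..z, (t : ℂ) ^ ν * g t) := by
  have hpow := continuous_ofReal_cpow_const_mul hν hg
  have hkernel : ∀ t ∈ uIcc 0 z,
      (1 - ((t / z : ℝ) : ℂ) ^ ν) * g t = g t - (z : ℂ) ^ (-ν) * ((t : ℂ) ^ ν * g t) := by
    intro t ht
    rw [uIcc_of_le hz] at ht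
    rw [Complex.ofReal_div_cpow_of_nonneg ht.1 hz, Complex.cpow_neg]
    ring
  rw [greenVolterra, intervalIntegral.integral_congr hkernel, intervalIntegral.integral_sub
    (hg.intervalIntegrable _ _) ((hpow.intervalIntegrable _ _).const_mul _),
    intervalIntegral.integral_const_mul]

theorem hasDerivAt_greenVolterra (hν : 0 < ν.re) (hg : Continuous g) {z : ℝ} (hz : 0 < z) :
    HasDerivAt (greenVolterra ν g) (greenVolterraDeriv ν g z) z := by
  have hpow := continuous_ofReal_cpow_const_mul hν hg
  have hz' : (z : ℂ) ≠ 0 := Complex.ofReal_ne_zero.2 hz.ne'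
  have hν0 : ν ≠ 0 := fun h => by simp [h] at hν
  have hderiv := ((hg.integral_hasStrictDerivAt 0 z).hasDerivAt.sub
    ((hasDerivAt_ofReal_cpow_of_pos hz (-ν)).mul
      (hpow.integral_hasStrictDerivAt 0 z).hasDerivAt)).const_mul (1 / ν)
  refine (hderiv.congr_of_eventuallyEq ?_).congr_deriv ?_
  · filter_upwards [lt_mem_nhds hz] with y hy using greenVolterra_eq hν hg hy.le
  · have hcancel : (z : ℂ) ^ (-ν) * (z : ℂ) ^ ν = 1 := by
      rw [← Complex.cpow_add _ _ hz', neg_add_cancel, Complex.cpow_zero]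
    rw [← mul_assoc ((z : ℂ) ^ (-ν)), hcancel, greenVolterraDeriv]
    field_simp
    ring

theorem hasDerivAt_greenVolterraDeriv (hν : 0 < ν.re) (hg : Continuous g) {z : ℝ} (hz : 0 < z) :
    HasDerivAt (greenVolterraDeriv ν g)
      ((g z - (ν + 1) * greenVolterraDeriv ν g z) / z) z := by
  have hpow := continuous_ofReal_cpow_const_mul hν hg
  have hz' : (z : ℂ) ≠ 0 := Complex.ofReal_ne_zero.2 hz.ne'
  refine ((hasDerivAt_ofReal_cpow_of_pos hz (-ν - 1)).mul
    (hpow.integral_hasStrictDerivAt 0 z).hasDerivAt).congr_deriv ?_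
  have hcancel : (z : ℂ) ^ (-ν) * (z : ℂ) ^ ν = 1 := by
    rw [← Complex.cpow_add _ _ hz', neg_add_cancel, Complex.cpow_zero]
  rw [Complex.cpow_sub _ _ hz', Complex.cpow_sub _ _ hz', Complex.cpow_one, greenVolterraDeriv,
    Complex.cpow_sub _ _ hz', Complex.cpow_one]
  field_simp
  linear_combination (z : ℂ) * g z * hcancel

end

theorem green_identity_at_zero_general
    (Λ : ℂ) (hΛ : 1 / 2 < Λ.re) (a : ℝ) (ha : 0 < a)
    (g w : ℝ → ℂ)
    (hg : ContinuousOn g (Set.Icc 0 a))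
    (heq : ∀ z ∈ Set.Ioc (0 : ℝ) a,
      w z = (1 / (2 * Λ - 1)) *
        ∫ t in (0 : ℝ)..z, (1 - (((t / z : ℝ)) : ℂ) ^ (2 * Λ - 1)) * g t) :
    (∀ z ∈ Set.Ioc (0 : ℝ) a, DifferentiableWithinAt ℝ w (Set.Ioc 0 a) z) ∧
    (∀ z ∈ Set.Ioc (0 : ℝ) a,
      DifferentiableWithinAt ℝ (derivWithin w (Set.Ioc 0 a)) (Set.Ioc 0 a) z) ∧
    (∀ z ∈ Set.Ioc (0 : ℝ) a,
      (z : ℂ) * derivWithin (derivWithin w (Set.Ioc 0 a)) (Set.Ioc 0 a) z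
        + 2 * Λ * derivWithin w (Set.Ioc 0 a) z = g z) := by
  set S := Ioc (0 : ℝ) a
  set ν := 2 * Λ - 1
  have hν : 0 < ν.re := by simp only [ν, Complex.sub_re, Complex.mul_re]; norm_num; linarith
  set G := IccExtend ha.le ((Icc 0 a).domRestrict g)
  have hG : Continuous G := continuous_IccExtend_iff.2 hg.domRestrict
  have hGg : EqOn G g (Icc 0 a) := fun t ht => IccExtend_of_mem ha.le _ ht
  have hwG : EqOn w (greenVolterra ν G) S := fun z hz =>
    (heq z hz).trans (greenVolterra_congr hz.1.le fun t ht => hGg ⟨ht.1, ht.2.trans hz.2⟩).symm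
  have hw' : ∀ z ∈ S, HasDerivWithinAt w (greenVolterraDeriv ν G z) S z := fun z hz =>
    (hasDerivAt_greenVolterra hν hG hz.1).hasDerivWithinAt.congr hwG (hwG hz)
  have hdw : EqOn (derivWithin w S) (greenVolterraDeriv ν G) S := fun z hz =>
    (hw' z hz).derivWithin (uniqueDiffOn_Ioc 0 a z hz)
  have hw'' : ∀ z ∈ S, HasDerivWithinAt (derivWithin w S)
      ((G z - (ν + 1) * greenVolterraDeriv ν G z) / z) S z := fun z hz =>
    (hasDerivAt_greenVolterraDeriv hν hG hz.1).hasDerivWithinAt.congr hdw (hdw hz)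
  refine ⟨fun z hz => (hw' z hz).differentiableWithinAt,
    fun z hz => (hw'' z hz).differentiableWithinAt, fun z hz => ?_⟩
  have hz0 : (z : ℂ) ≠ 0 := Complex.ofReal_ne_zero.2 hz.1.ne'
  rw [(hw'' z hz).derivWithin (uniqueDiffOn_Ioc 0 a z hz), hdw hz, hGg (Ioc_subset_Icc_self hz)]
  field_simp
  ring

/-- Green's function identity for the IVP at `0`: if `Re Λ > 1/2`,
`g, w` are continuous on `[0,a]`, `w 0 = 0` and
`w z = (1/(2Λ-1)) ∫₀^z [1 - (t/z)^(2Λ-1)] g t dt` on `(0,a]`, then `w` is twice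
differentiable on `(0,a]` and satisfies `z w'' + 2Λ w' = g z` there
(derivatives taken within `(0,a]`). -/
theorem green_identity_at_zero
    (Λ : ℂ) (hΛ : 1 / 2 < Λ.re) (a : ℝ) (ha : 0 < a)
    (g w : ℝ → ℂ)
    (hg : ContinuousOn g (Set.Icc 0 a)) (hw : ContinuousOn w (Set.Icc 0 a))
    (hw0 : w 0 = 0)
    (heq : ∀ z ∈ Set.Ioc (0 : ℝ) a,
      w z = (1 / (2 * Λ - 1)) *
        ∫ t in (0 : ℝ)..z, (1 - (((t / z : ℝ)) : ℂ) ^ (2 * Λ - 1)) * g t) :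
    (∀ z ∈ Set.Ioc (0 : ℝ) a, DifferentiableWithinAt ℝ w (Set.Ioc 0 a) z) ∧
    (∀ z ∈ Set.Ioc (0 : ℝ) a,
      DifferentiableWithinAt ℝ (derivWithin w (Set.Ioc 0 a)) (Set.Ioc 0 a) z) ∧
    (∀ z ∈ Set.Ioc (0 : ℝ) a,
      (z : ℂ) * derivWithin (derivWithin w (Set.Ioc 0 a)) (Set.Ioc 0 a) z
        + 2 * Λ * derivWithin w (Set.Ioc 0 a) z = g z) :=
  green_identity_at_zero_general Λ hΛ a ha g w hg heq
end

section
/- Iterated contraction bound: let Λ ∈ ℂ with Re(Λ) > 1/2, let g : [0, a] → ℂ be continuous with sup norm ‖g‖_∞, and define for continuous u : [0,a] → ℂ the operator (T u)(z) = (1/(2Λ-1)) ∫₀^z [1 - (t/z)^{2Λ-1}] g(t) u(t) dt. Then for all continuous u, v and all n ≥ 1 and z ∈ [0,a], |(Tⁿu)(z) - (Tⁿv)(z)| ≤ (2z)ⁿ ‖g‖_∞ⁿ / (n! |2Λ-1|ⁿ) · ‖u - v‖_∞. -/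
/-!
Since `‖1 - (t/z)^(2Λ-1)‖ ≤ 2`, a bound `‖u t - v t‖ ≤ D t^m / m!` on `[0,a]` yields
`‖T u z - T v z‖ ≤ (2‖g‖_∞ / ‖2Λ-1‖) D z^(m+1) / (m+1)!`, and induction on `n` gives the claim.
For this the integrals defining the iterates must be genuine rather than junk values, so we carry
along that the iterates are bounded and a.e.-measurable on `[0,a]`. Measurability of `T u` comes
from the factorisation `(t/z)^w = t^w / z^w`, which writes `T u` through two continuous
primitives.
-/

open MeasureTheory Set Complex

def BoundedAEMeasurableOn (u : ℝ → ℂ) (s : Set ℝ) : Prop :=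
  AEStronglyMeasurable u (volume.restrict s) ∧ ∃ B, ∀ t ∈ s, ‖u t‖ ≤ B

namespace BoundedAEMeasurableOn

variable {s : Set ℝ} {u v : ℝ → ℂ}

theorem of_continuousOn (hs : IsCompact s) (hs' : MeasurableSet s) (hu : ContinuousOn u s) :
    BoundedAEMeasurableOn u s :=
  ⟨hu.aestronglyMeasurable hs', hs.exists_bound_of_continuousOn hu⟩

theorem mul (hu : BoundedAEMeasurableOn u s) (hv : BoundedAEMeasurableOn v s) :
    BoundedAEMeasurableOn (fun t => u t * v t) s := by
  obtain ⟨hum, B, hB⟩ := hu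
  obtain ⟨hvm, B', hB'⟩ := hv
  refine ⟨hum.mul hvm, B * B', fun t ht => ?_⟩
  rw [norm_mul]
  exact mul_le_mul (hB t ht) (hB' t ht) (norm_nonneg _) ((norm_nonneg _).trans (hB t ht))

theorem mono {s' : Set ℝ} (hu : BoundedAEMeasurableOn u s) (hs : s' ⊆ s) :
    BoundedAEMeasurableOn u s' :=
  ⟨hu.1.mono_measure (Measure.restrict_mono hs le_rfl), hu.2.imp fun _ hB t ht => hB t (hs ht)⟩

theorem integrableOn (hu : BoundedAEMeasurableOn u s) (hs : MeasurableSet s)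
    (hs' : volume s < ⊤) : IntegrableOn u s := by
  obtain ⟨hum, B, hB⟩ := hu
  have : IsFiniteMeasure (volume.restrict s) := isFiniteMeasure_restrict.mpr hs'.ne
  exact Integrable.mono' (integrable_const B) hum (ae_restrict_of_forall_mem hs hB)

variable {a z : ℝ}

theorem intervalIntegrable (hu : BoundedAEMeasurableOn u (Icc 0 a)) (hz : z ∈ Icc 0 a) :
    IntervalIntegrable u volume 0 z := by
  apply IntegrableOn.intervalIntegrable
  rw [uIcc_of_le hz.1]
  exact (hu.mono (Icc_subset_Icc_right hz.2)).integrableOn measurableSet_Icc measure_Icc_lt_top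

theorem continuousOn_primitive (hu : BoundedAEMeasurableOn u (Icc 0 a)) :
    ContinuousOn (fun z => ∫ t in (0 : ℝ)..z, u t) (Icc 0 a) := by
  rcases le_or_gt 0 a with ha | ha
  · have hint : IntegrableOn u (uIcc 0 a) := by
      rw [uIcc_of_le ha]; exact hu.integrableOn measurableSet_Icc measure_Icc_lt_top
    simpa only [uIcc_of_le ha] using intervalIntegral.continuousOn_primitive_interval hint
  · simp [Icc_eq_empty_of_lt ha]

end BoundedAEMeasurableOn

section kernel

variable {w : ℂ} {t z : ℝ}

theorem ofReal_div_cpow (ht : 0 ≤ t) (hz : 0 ≤ z) :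
    ((t / z : ℝ) : ℂ) ^ w = (t : ℂ) ^ w / (z : ℂ) ^ w := by
  rw [ofReal_div, div_cpow_ofReal_nonneg ht hz]

theorem norm_one_sub_ofReal_div_cpow_le_two (ht : 0 < t) (htz : t ≤ z) (hw : 0 ≤ w.re) :
    ‖1 - ((t / z : ℝ) : ℂ) ^ w‖ ≤ 2 := by
  have hz : 0 < z := ht.trans_le htz
  have hpow : ‖((t / z : ℝ) : ℂ) ^ w‖ ≤ 1 := by
    rw [norm_cpow_eq_rpow_re_of_pos (div_pos ht hz)]
    exact Real.rpow_le_one (div_nonneg ht.le hz.le) ((div_le_one hz).mpr htz) hw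
  calc ‖1 - ((t / z : ℝ) : ℂ) ^ w‖ ≤ ‖(1 : ℂ)‖ + ‖((t / z : ℝ) : ℂ) ^ w‖ := norm_sub_le _ _
    _ ≤ 2 := by rw [norm_one]; linarith

theorem measurable_ofReal_div_cpow (z : ℝ) (w : ℂ) :
    Measurable fun t : ℝ => ((t / z : ℝ) : ℂ) ^ w :=
  (measurable_ofReal.comp (measurable_id.div_const z)).pow_const w

end kernel

section kernelIntegral

variable {w : ℂ} {a z : ℝ} {h : ℝ → ℂ}

theorem intervalIntegrable_one_sub_ofReal_div_cpow_mul (hw : 0 ≤ w.re)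
    (hh : BoundedAEMeasurableOn h (Icc 0 a)) (hz : z ∈ Icc 0 a) :
    IntervalIntegrable (fun t => (1 - ((t / z : ℝ) : ℂ) ^ w) * h t) volume 0 z := by
  obtain ⟨hhm, B, hB⟩ := hh.mono (s' := Ioc 0 z) fun t ht => ⟨ht.1.le, ht.2.trans hz.2⟩
  rw [intervalIntegrable_iff_integrableOn_Ioc_of_le hz.1]
  refine Integrable.mono' (integrable_const (2 * B))
    (((measurable_const.sub (measurable_ofReal_div_cpow z w)).aestronglyMeasurable).mul hhm)
    (ae_restrict_of_forall_mem measurableSet_Ioc fun t ht => ?_)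
  rw [norm_mul]
  exact mul_le_mul (norm_one_sub_ofReal_div_cpow_le_two ht.1 ht.2 hw) (hB t ht) (norm_nonneg _)
    zero_le_two

theorem integral_one_sub_ofReal_div_cpow_mul (hz : 0 ≤ z) (hh : IntervalIntegrable h volume 0 z)
    (hh' : IntervalIntegrable (fun t => (t : ℂ) ^ w * h t) volume 0 z) :
    ∫ t in (0 : ℝ)..z, (1 - ((t / z : ℝ) : ℂ) ^ w) * h t =
      (∫ t in (0 : ℝ)..z, h t) - (∫ t in (0 : ℝ)..z, (t : ℂ) ^ w * h t) / (z : ℂ) ^ w := by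
  rw [← intervalIntegral.integral_div, ← intervalIntegral.integral_sub hh (hh'.div_const _)]
  refine intervalIntegral.integral_congr fun t ht => ?_
  rw [uIcc_of_le hz] at ht
  simp only [ofReal_div_cpow ht.1 hz]
  ring

theorem aestronglyMeasurable_integral_one_sub_ofReal_div_cpow_mul (hw : 0 < w.re)
    (hh : BoundedAEMeasurableOn h (Icc 0 a)) :
    AEStronglyMeasurable (fun z => ∫ t in (0 : ℝ)..z, (1 - ((t / z : ℝ) : ℂ) ^ w) * h t)
      (volume.restrict (Icc 0 a)) := by
  have hpowh : BoundedAEMeasurableOn (fun t : ℝ => (t : ℂ) ^ w * h t) (Icc 0 a) :=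
    (BoundedAEMeasurableOn.of_continuousOn isCompact_Icc measurableSet_Icc
      (continuous_ofReal_cpow_const hw).continuousOn).mul hh
  refine AEStronglyMeasurable.congr ?_ (ae_restrict_of_forall_mem measurableSet_Icc fun z hz =>
    (integral_one_sub_ofReal_div_cpow_mul hz.1 (hh.intervalIntegrable hz)
      (hpowh.intervalIntegrable hz)).symm)
  exact (hh.continuousOn_primitive.aestronglyMeasurable measurableSet_Icc).sub
    ((hpowh.continuousOn_primitive.aestronglyMeasurable measurableSet_Icc).div₀
      (measurable_ofReal.pow_const w).aestronglyMeasurable)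

end kernelIntegral

noncomputable def volterraOp (w : ℂ) (g u : ℝ → ℂ) (z : ℝ) : ℂ :=
  (1 / w) * ∫ t in (0 : ℝ)..z, (1 - ((t / z : ℝ) : ℂ) ^ w) * g t * u t

section volterraOp

variable {w : ℂ} {a z : ℝ} {g u : ℝ → ℂ}

theorem volterraOp_eq : volterraOp w g u z =
    w⁻¹ * ∫ t in (0 : ℝ)..z, (1 - ((t / z : ℝ) : ℂ) ^ w) * (g t * u t) := by
  simp only [volterraOp, one_div, mul_assoc]

theorem norm_volterraOp_le (hw : 0 ≤ w.re) (hz : 0 ≤ z) {φ : ℝ → ℝ}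
    (hφ : IntervalIntegrable φ volume 0 z) (hguφ : ∀ t ∈ Ioc 0 z, ‖g t * u t‖ ≤ φ t) :
    ‖volterraOp w g u z‖ ≤ 2 / ‖w‖ * ∫ t in (0 : ℝ)..z, φ t := by
  rw [volterraOp_eq, norm_mul, norm_inv, div_eq_inv_mul, mul_assoc,
    ← intervalIntegral.integral_const_mul]
  gcongr
  refine intervalIntegral.norm_integral_le_of_norm_le hz (ae_of_all _ fun t ht => ?_)
    (hφ.const_mul 2)
  rw [norm_mul]
  exact mul_le_mul (norm_one_sub_ofReal_div_cpow_le_two ht.1 ht.2 hw) (hguφ t ht) (norm_nonneg _)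
    zero_le_two

theorem volterraOp_sub_apply (hw : 0 ≤ w.re) (hg : BoundedAEMeasurableOn g (Icc 0 a))
    {u₁ u₂ : ℝ → ℂ} (hu₁ : BoundedAEMeasurableOn u₁ (Icc 0 a))
    (hu₂ : BoundedAEMeasurableOn u₂ (Icc 0 a)) (hz : z ∈ Icc 0 a) :
    volterraOp w g u₁ z - volterraOp w g u₂ z = volterraOp w g (fun t => u₁ t - u₂ t) z := by
  rw [volterraOp_eq, volterraOp_eq, volterraOp_eq, ← mul_sub, ← intervalIntegral.integral_sub
    (intervalIntegrable_one_sub_ofReal_div_cpow_mul hw (hg.mul hu₁) hz)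
    (intervalIntegrable_one_sub_ofReal_div_cpow_mul hw (hg.mul hu₂) hz)]
  congr 1
  exact intervalIntegral.integral_congr fun t _ => by ring

theorem boundedAEMeasurableOn_volterraOp (hw : 0 < w.re) (hg : BoundedAEMeasurableOn g (Icc 0 a))
    (hu : BoundedAEMeasurableOn u (Icc 0 a)) :
    BoundedAEMeasurableOn (volterraOp w g u) (Icc 0 a) := by
  have hgu := hg.mul hu
  obtain ⟨B, hB⟩ := hgu.2
  have hmeas : AEStronglyMeasurable (volterraOp w g u) (volume.restrict (Icc 0 a)) := by
    rw [show volterraOp w g u = _ from funext fun _ => volterraOp_eq]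
    exact (aestronglyMeasurable_integral_one_sub_ofReal_div_cpow_mul hw hgu).const_mul _
  refine ⟨hmeas, 2 / ‖w‖ * (a * B), fun z hz => ?_⟩
  have hB0 : 0 ≤ B := (norm_nonneg _).trans (hB z hz)
  calc ‖volterraOp w g u z‖ ≤ 2 / ‖w‖ * ∫ _ in (0 : ℝ)..z, B :=
        norm_volterraOp_le hw.le hz.1 intervalIntegrable_const
          fun t ht => hB t ⟨ht.1.le, ht.2.trans hz.2⟩
    _ ≤ 2 / ‖w‖ * (a * B) := by
        rw [intervalIntegral.integral_const, smul_eq_mul, sub_zero]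
        gcongr
        exact hz.2

theorem norm_volterraOp_sub_le (hw : 0 < w.re) (hg : BoundedAEMeasurableOn g (Icc 0 a)) {C : ℝ}
    (hC : ∀ t ∈ Icc 0 a, ‖g t‖ ≤ C) {u₁ u₂ : ℝ → ℂ} (hu₁ : BoundedAEMeasurableOn u₁ (Icc 0 a))
    (hu₂ : BoundedAEMeasurableOn u₂ (Icc 0 a)) {D : ℝ} {m : ℕ}
    (hD : ∀ t ∈ Icc 0 a, ‖u₁ t - u₂ t‖ ≤ D * t ^ m / m.factorial) (hz : z ∈ Icc 0 a) :
    ‖volterraOp w g u₁ z - volterraOp w g u₂ z‖ ≤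
      2 * C / ‖w‖ * D * z ^ (m + 1) / (m + 1).factorial := by
  have hval : ∫ t in (0 : ℝ)..z, C * (D * t ^ m / m.factorial) =
      C * D * z ^ (m + 1) / (m + 1).factorial := by
    simp only [mul_div_assoc, intervalIntegral.integral_const_mul, intervalIntegral.integral_div,
      integral_pow]
    rw [Nat.factorial_succ]
    push_cast
    field_simp
    ring
  rw [volterraOp_sub_apply hw.le hg hu₁ hu₂ hz]
  calc ‖volterraOp w g (fun t => u₁ t - u₂ t) z‖
      ≤ 2 / ‖w‖ * ∫ t in (0 : ℝ)..z, C * (D * t ^ m / m.factorial) := by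
        refine norm_volterraOp_le hw.le hz.1 (Continuous.intervalIntegrable (by fun_prop) _ _)
          fun t ht => ?_
        have htI : t ∈ Icc 0 a := ⟨ht.1.le, ht.2.trans hz.2⟩
        rw [norm_mul]
        exact mul_le_mul (hC t htI) (hD t htI) (norm_nonneg _) ((norm_nonneg _).trans (hC t htI))
    _ = _ := by rw [hval]; ring

end volterraOp

theorem norm_iterate_sub_le_of_norm_sub_le_pow {E : Type*} [SeminormedAddCommGroup E]
    {S : Set (ℝ → E)} {s : Set ℝ} {V : (ℝ → E) → ℝ → E} {K : ℝ} (hS : MapsTo V S S)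
    (hV : ∀ u ∈ S, ∀ v ∈ S, ∀ (D : ℝ) (m : ℕ), (∀ t ∈ s, ‖u t - v t‖ ≤ D * t ^ m / m.factorial) →
      ∀ z ∈ s, ‖V u z - V v z‖ ≤ K * D * z ^ (m + 1) / (m + 1).factorial)
    {u v : ℝ → E} (hu : u ∈ S) (hv : v ∈ S) {M : ℝ} (huv : ∀ t ∈ s, ‖u t - v t‖ ≤ M) (n : ℕ) :
    ∀ z ∈ s, ‖V^[n] u z - V^[n] v z‖ ≤ K ^ n * M * z ^ n / n.factorial := by
  induction n with
  | zero => simpa using huv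
  | succ n ih =>
    intro z hz
    rw [Function.iterate_succ_apply', Function.iterate_succ_apply', pow_succ', mul_assoc K]
    exact hV _ (hS.iterate n hu) _ (hS.iterate n hv) _ n ih z hz

theorem IsCompact.norm_le_ciSup_norm {α E : Type*} [TopologicalSpace α] [SeminormedAddCommGroup E]
    {s : Set α} (hs : IsCompact s) {f : α → E} (hf : ContinuousOn f s) {x : α} (hx : x ∈ s) :
    ‖f x‖ ≤ ⨆ t : s, ‖f t‖ := by
  obtain ⟨C, hC⟩ := hs.exists_bound_of_continuousOn hf
  exact le_ciSup ⟨C, by rintro _ ⟨t, rfl⟩; exact hC t t.2⟩ (⟨x, hx⟩ : s)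

theorem iterated_contraction_bound_general
    (Λ : ℂ) (hΛ : 1 / 2 < Λ.re) (a : ℝ)
    (g : ℝ → ℂ) (hg : ContinuousOn g (Set.Icc 0 a))
    (T : (ℝ → ℂ) → (ℝ → ℂ))
    (hT : ∀ u z, T u z = (1 / (2 * Λ - 1)) *
      ∫ t in (0 : ℝ)..z, (1 - (((t / z : ℝ)) : ℂ) ^ (2 * Λ - 1)) * g t * u t) :
    ∀ u v : ℝ → ℂ, ContinuousOn u (Set.Icc 0 a) → ContinuousOn v (Set.Icc 0 a) →
      ∀ n : ℕ, 1 ≤ n → ∀ z ∈ Set.Icc (0 : ℝ) a,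
        ‖T^[n] u z - T^[n] v z‖ ≤
          (2 * z) ^ n * (⨆ t : Set.Icc (0 : ℝ) a, ‖g t‖) ^ n /
              (n.factorial * (‖2 * Λ - 1‖) ^ n) *
            (⨆ t : Set.Icc (0 : ℝ) a, ‖u t - v t‖) := by
  intro u v hu hv n _ z hz
  obtain rfl : T = volterraOp (2 * Λ - 1) g := funext fun u => funext (hT u)
  have hw : 0 < (2 * Λ - 1).re := by simp only [sub_re, mul_re, one_re]; norm_num; linarith
  have hbdd : ∀ f, ContinuousOn f (Icc 0 a) → BoundedAEMeasurableOn f (Icc 0 a) :=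
    fun f hf => .of_continuousOn isCompact_Icc measurableSet_Icc hf
  calc ‖(volterraOp (2 * Λ - 1) g)^[n] u z - (volterraOp (2 * Λ - 1) g)^[n] v z‖
      ≤ (2 * (⨆ t : Icc (0 : ℝ) a, ‖g t‖) / ‖2 * Λ - 1‖) ^ n *
          (⨆ t : Icc (0 : ℝ) a, ‖u t - v t‖) * z ^ n / n.factorial :=
        norm_iterate_sub_le_of_norm_sub_le_pow (S := {f | BoundedAEMeasurableOn f (Icc 0 a)})
          (fun f hf => boundedAEMeasurableOn_volterraOp hw (hbdd g hg) hf)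
          (fun u₁ hu₁ u₂ hu₂ D m hD z hz => norm_volterraOp_sub_le hw (hbdd g hg)
            (fun t ht => isCompact_Icc.norm_le_ciSup_norm hg ht) hu₁ hu₂ hD hz)
          (hbdd u hu) (hbdd v hv) (fun t ht => isCompact_Icc.norm_le_ciSup_norm (hu.sub hv) ht)
          n z hz
    _ = _ := by rw [div_pow, mul_pow, mul_pow]; ring

/-- Iterated contraction bound: with `Re Λ > 1/2`, `g` continuous on
`[0,a]` with sup norm `‖g‖_∞`, and `(T u)(z) = (1/(2Λ-1)) ∫₀^z [1-(t/z)^(2Λ-1)] g t · u t dt`,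
for all continuous `u, v`, all `n ≥ 1` and `z ∈ [0,a]`:
`|(Tⁿu)(z) - (Tⁿv)(z)| ≤ (2z)ⁿ ‖g‖_∞ⁿ / (n! |2Λ-1|ⁿ) · ‖u-v‖_∞`. -/
theorem iterated_contraction_bound
    (Λ : ℂ) (hΛ : 1 / 2 < Λ.re) (a : ℝ) (ha : 0 < a)
    (g : ℝ → ℂ) (hg : ContinuousOn g (Set.Icc 0 a))
    (T : (ℝ → ℂ) → (ℝ → ℂ))
    (hT : ∀ u z, T u z = (1 / (2 * Λ - 1)) *
      ∫ t in (0 : ℝ)..z, (1 - (((t / z : ℝ)) : ℂ) ^ (2 * Λ - 1)) * g t * u t) :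
    ∀ u v : ℝ → ℂ, ContinuousOn u (Set.Icc 0 a) → ContinuousOn v (Set.Icc 0 a) →
      ∀ n : ℕ, 1 ≤ n → ∀ z ∈ Set.Icc (0 : ℝ) a,
        ‖T^[n] u z - T^[n] v z‖ ≤
          (2 * z) ^ n * (⨆ t : Set.Icc (0 : ℝ) a, ‖g t‖) ^ n /
              (n.factorial * (‖2 * Λ - 1‖) ^ n) *
            (⨆ t : Set.Icc (0 : ℝ) a, ‖u t - v t‖) :=
  iterated_contraction_bound_general Λ hΛ a g hg T hT
end

section
/- Uniform O(Λ^{-n}) bound for Olver's remainder: let Re(Λ) > 1/2, g continuous and integrable on [0,a] with ‖g‖₁ = ∫₀^a |g|, and let R satisfy the Volterra equation R(z) = (1/(2Λ-1)) ∫₀^z [1-(t/z)^{2Λ-1}] [ A'(t)/(2Λ)^{n-1} + g(t) R(t) ] dt where A' is continuous with ‖A'‖₁ = ∫₀^a|A'|. Then |R(z)| ≤ (2‖A'‖₁ / (|2Λ-1| |2Λ|^{n-1})) · exp( 2‖g‖₁/|2Λ-1| ) for all z ∈ [0,a]. -/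
/-!
With `s = 2Λ - 1` and forcing term `f = A' / (2Λ)^(n-1)`, the kernel satisfies
`‖1 - (t/z)^s‖ ≤ 2` for `0 ≤ t ≤ z` since `Re s > 0`, so the Volterra equation gives
`‖R z‖ ≤ K + L ∫₀^z ‖g‖ ‖R‖` with `K = 2‖f‖₁/|s|` and `L = 2/|s|`. Grönwall's
inequality, proved by showing that `(K + L ∫₀^z β φ) · exp(-L ∫₀^z β)` is antitone, then bounds
`‖R z‖` by `K exp(L ‖g‖₁)`.
-/

open MeasureTheory intervalIntegral Set Real

theorem hasDerivAt_integral_of_continuousOn_Icc {E : Type*} [NormedAddCommGroup E]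
    [NormedSpace ℝ E] [CompleteSpace E] {f : ℝ → E} {a b z : ℝ}
    (hf : ContinuousOn f (Icc a b)) (hz : z ∈ Ioo a b) :
    HasDerivAt (fun x => ∫ t in a..x, f t) (f z) z :=
  integral_hasDerivAt_right
    ((hf.mono (Icc_subset_Icc_right hz.2.le)).intervalIntegrable_of_Icc hz.1.le)
    ((hf.mono Ioo_subset_Icc_self).stronglyMeasurableAtFilter isOpen_Ioo z hz)
    (hf.continuousAt (Icc_mem_nhds hz.1 hz.2))

theorem continuousOn_integral_of_continuousOn_Icc {E : Type*} [NormedAddCommGroup E]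
    [NormedSpace ℝ E] {f : ℝ → E} {a b : ℝ} (hf : ContinuousOn f (Icc a b)) :
    ContinuousOn (fun x => ∫ t in a..x, f t) (Icc a b) := by
  rcases le_or_gt a b with hab | hab
  · simpa only [uIcc_of_le hab] using
      continuousOn_primitive_interval' (hf.intervalIntegrable_of_Icc hab) left_mem_uIcc
  · rw [Icc_eq_empty_of_lt hab]
    exact continuousOn_empty _

/-- Grönwall's inequality in integral form, with a variable coefficient. -/
theorem le_mul_exp_integral_of_le_add_mul_integral {a b K L : ℝ} {φ β : ℝ → ℝ}
    (hφ : ContinuousOn φ (Icc a b)) (hβ : ContinuousOn β (Icc a b))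
    (hβ0 : ∀ t ∈ Icc a b, 0 ≤ β t) (hL : 0 ≤ L)
    (h : ∀ z ∈ Icc a b, φ z ≤ K + L * ∫ t in a..z, β t * φ t) :
    ∀ z ∈ Icc a b, φ z ≤ K * exp (L * ∫ t in a..z, β t) := by
  intro z hz
  have hab : a ≤ b := hz.1.trans hz.2
  have hβφ : ContinuousOn (fun t => β t * φ t) (Icc a b) := hβ.mul hφ
  set F := fun x => ∫ t in a..x, β t * φ t
  set G := fun x => ∫ t in a..x, β t
  set H := fun x => (K + L * F x) * exp (-(L * G x))
  have hH_cont : ContinuousOn H (Icc a b) :=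
    (continuousOn_const.add (continuousOn_const.mul (continuousOn_integral_of_continuousOn_Icc hβφ))).mul
      (continuous_exp.comp_continuousOn (continuousOn_const.mul (continuousOn_integral_of_continuousOn_Icc hβ)).neg)
  have hH_anti : AntitoneOn H (Icc a b) := by
    refine antitoneOn_of_hasDerivWithinAt_nonpos (convex_Icc a b) hH_cont
      (f' := fun x => L * β x * exp (-(L * G x)) * (φ x - (K + L * F x))) (fun x hx => ?_)
      (fun x hx => ?_) <;> rw [interior_Icc] at hx
    · have hF := ((hasDerivAt_integral_of_continuousOn_Icc hβφ hx).const_mul L).const_add K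
      have hG := ((hasDerivAt_integral_of_continuousOn_Icc hβ hx).const_mul L).neg.exp
      have hH : HasDerivAt H (L * (β x * φ x) * exp (-(L * G x)) +
          (K + L * F x) * (exp (-(L * G x)) * -(L * β x))) x := hF.mul hG
      exact (hH.congr_deriv (by ring)).hasDerivWithinAt
    · have := h x (Ioo_subset_Icc_self hx)
      have := hβ0 x (Ioo_subset_Icc_self hx)
      exact mul_nonpos_of_nonneg_of_nonpos (by positivity) (by linarith)
  have hHa : H a = K := by simp [H, F, G]
  have hHz : H z ≤ H a := hH_anti (left_mem_Icc.2 hab) hz hz.1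
  rw [hHa] at hHz
  calc φ z ≤ K + L * F z := h z hz
    _ = H z * exp (L * G z) := by rw [mul_assoc, ← exp_add, neg_add_cancel, exp_zero, mul_one]
    _ ≤ K * exp (L * G z) := by gcongr

theorem norm_one_sub_ofReal_cpow_le_two {x : ℝ} (hx0 : 0 ≤ x) (hx1 : x ≤ 1) {s : ℂ}
    (hs : 0 < s.re) : ‖1 - (x : ℂ) ^ s‖ ≤ 2 := by
  calc ‖1 - (x : ℂ) ^ s‖ ≤ ‖(1 : ℂ)‖ + ‖(x : ℂ) ^ s‖ := norm_sub_le _ _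
    _ = 1 + x ^ s.re := by rw [norm_one, Complex.norm_cpow_eq_rpow_re_of_nonneg hx0 hs.ne']
    _ ≤ 1 + 1 := by gcongr; exact rpow_le_one hx0 hx1 hs.le
    _ = 2 := by norm_num

theorem norm_integral_one_sub_cpow_mul_le {s : ℂ} (hs : 0 < s.re) {z : ℝ} (hz : 0 ≤ z)
    {f : ℝ → ℂ} (hf : IntervalIntegrable f volume 0 z) :
    ‖∫ t in (0 : ℝ)..z, (1 - ((t / z : ℝ) : ℂ) ^ s) * f t‖ ≤ 2 * ∫ t in (0 : ℝ)..z, ‖f t‖ := by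
  rw [← intervalIntegral.integral_const_mul]
  refine norm_integral_le_of_norm_le hz (ae_of_all _ fun t ht => ?_) (hf.norm.const_mul 2)
  have hz0 : 0 < z := ht.1.trans_le ht.2
  rw [norm_mul]
  gcongr
  exact norm_one_sub_ofReal_cpow_le_two (div_nonneg ht.1.le hz0.le) ((div_le_one hz0).2 ht.2) hs

section Volterra

variable {s : ℂ} {a : ℝ} {f g R : ℝ → ℂ}

theorem norm_le_add_mul_integral_of_volterra (hs : 0 < s.re)
    (hf : ContinuousOn f (Icc 0 a)) (hg : ContinuousOn g (Icc 0 a))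
    (hR : ContinuousOn R (Icc 0 a))
    (heq : ∀ z ∈ Icc (0 : ℝ) a,
      R z = (1 / s) * ∫ t in (0 : ℝ)..z, (1 - ((t / z : ℝ) : ℂ) ^ s) * (f t + g t * R t)) :
    ∀ z ∈ Icc (0 : ℝ) a, ‖R z‖ ≤
      2 * (∫ t in (0 : ℝ)..a, ‖f t‖) / ‖s‖ + 2 / ‖s‖ * ∫ t in (0 : ℝ)..z, ‖g t‖ * ‖R t‖ := by
  intro z hz
  have hint : ∀ {h : ℝ → ℂ}, ContinuousOn h (Icc 0 a) → IntervalIntegrable h volume 0 z :=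
    fun hh => (hh.mono (Icc_subset_Icc_right hz.2)).intervalIntegrable_of_Icc hz.1
  have hfI := hint hf
  have hgRI : IntervalIntegrable (fun t => g t * R t) volume 0 z := hint (hg.mul hR)
  calc ‖R z‖ = ‖∫ t in (0 : ℝ)..z, (1 - ((t / z : ℝ) : ℂ) ^ s) * (f t + g t * R t)‖ / ‖s‖ := by
        rw [heq z hz, norm_mul, norm_div, norm_one, one_div_mul_eq_div]
    _ ≤ 2 * (∫ t in (0 : ℝ)..z, ‖f t + g t * R t‖) / ‖s‖ := by
        gcongr
        exact norm_integral_one_sub_cpow_mul_le hs hz.1 (hfI.add hgRI)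
    _ ≤ 2 * ((∫ t in (0 : ℝ)..z, ‖f t‖) + ∫ t in (0 : ℝ)..z, ‖g t‖ * ‖R t‖) / ‖s‖ := by
        gcongr
        simp_rw [← norm_mul]
        rw [← integral_add hfI.norm hgRI.norm]
        exact integral_mono_on hz.1 (hfI.add hgRI).norm (hfI.norm.add hgRI.norm)
          fun t _ => norm_add_le _ _
    _ ≤ 2 * ((∫ t in (0 : ℝ)..a, ‖f t‖) + ∫ t in (0 : ℝ)..z, ‖g t‖ * ‖R t‖) / ‖s‖ := by
        gcongr
        exact integral_mono_interval le_rfl hz.1 hz.2 (ae_of_all _ fun t => norm_nonneg (f t))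
          (hf.norm.intervalIntegrable_of_Icc (hz.1.trans hz.2))
    _ = _ := by ring

theorem norm_le_mul_exp_of_volterra (hs : 0 < s.re)
    (hf : ContinuousOn f (Icc 0 a)) (hg : ContinuousOn g (Icc 0 a))
    (hR : ContinuousOn R (Icc 0 a))
    (heq : ∀ z ∈ Icc (0 : ℝ) a,
      R z = (1 / s) * ∫ t in (0 : ℝ)..z, (1 - ((t / z : ℝ) : ℂ) ^ s) * (f t + g t * R t)) :
    ∀ z ∈ Icc (0 : ℝ) a, ‖R z‖ ≤
      2 * (∫ t in (0 : ℝ)..a, ‖f t‖) / ‖s‖ * exp (2 * (∫ t in (0 : ℝ)..a, ‖g t‖) / ‖s‖) := by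
  intro z hz
  have ha : 0 ≤ a := hz.1.trans hz.2
  have hK : 0 ≤ 2 * (∫ t in (0 : ℝ)..a, ‖f t‖) / ‖s‖ := by
    have : 0 ≤ ∫ t in (0 : ℝ)..a, ‖f t‖ := integral_nonneg ha fun t _ => norm_nonneg (f t)
    positivity
  calc ‖R z‖ ≤ 2 * (∫ t in (0 : ℝ)..a, ‖f t‖) / ‖s‖ *
        exp (2 / ‖s‖ * ∫ t in (0 : ℝ)..z, ‖g t‖) :=
        le_mul_exp_integral_of_le_add_mul_integral hR.norm hg.norm
          (fun t _ => norm_nonneg (g t)) (by positivity)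
          (norm_le_add_mul_integral_of_volterra hs hf hg hR heq) z hz
    _ ≤ 2 * (∫ t in (0 : ℝ)..a, ‖f t‖) / ‖s‖ *
        exp (2 / ‖s‖ * ∫ t in (0 : ℝ)..a, ‖g t‖) := by
        gcongr
        exact integral_mono_interval le_rfl hz.1 hz.2 (ae_of_all _ fun t => norm_nonneg (g t))
          (hg.norm.intervalIntegrable_of_Icc ha)
    _ = _ := by rw [div_mul_eq_mul_div 2 ‖s‖]

end Volterra

theorem olver_remainder_uniform_bound_general
    (Λ : ℂ) (hΛ : 1 / 2 < Λ.re) (a : ℝ) (n : ℕ)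
    (g A' R : ℝ → ℂ)
    (hg : ContinuousOn g (Set.Icc 0 a)) (hA' : ContinuousOn A' (Set.Icc 0 a))
    (hR : ContinuousOn R (Set.Icc 0 a))
    (heq : ∀ z ∈ Set.Icc (0 : ℝ) a,
      R z = (1 / (2 * Λ - 1)) *
        ∫ t in (0 : ℝ)..z, (1 - (((t / z : ℝ)) : ℂ) ^ (2 * Λ - 1)) *
          (A' t / (2 * Λ) ^ (n - 1) + g t * R t)) :
    ∀ z ∈ Set.Icc (0 : ℝ) a,
      ‖R z‖ ≤
        2 * (∫ t in (0 : ℝ)..a, ‖A' t‖) /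
            (‖2 * Λ - 1‖ * (‖2 * Λ‖) ^ (n - 1)) *
          Real.exp (2 * (∫ t in (0 : ℝ)..a, ‖g t‖) /
            ‖2 * Λ - 1‖) := by
  intro z hz
  have hs : 0 < (2 * Λ - 1).re := by
    simp only [Complex.sub_re, Complex.mul_re, Complex.re_ofNat, Complex.im_ofNat, Complex.one_re,
      zero_mul, sub_zero]
    linarith
  have hforcing : ∫ t in (0 : ℝ)..a, ‖A' t / (2 * Λ) ^ (n - 1)‖ =
      (∫ t in (0 : ℝ)..a, ‖A' t‖) / ‖2 * Λ‖ ^ (n - 1) := by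
    simp_rw [norm_div, norm_pow]
    exact integral_div _ _
  calc ‖R z‖ ≤ _ := norm_le_mul_exp_of_volterra hs (hA'.div_const _) hg hR heq z hz
    _ = _ := by rw [hforcing]; ring

/-- Uniform `O(Λ⁻ⁿ)` bound for Olver's remainder: if `Re Λ > 1/2`,
`g` and `A'` are continuous on `[0,a]` with `‖g‖₁ = ∫₀^a |g|`, `‖A'‖₁ = ∫₀^a |A'|`,
and `R` satisfies the Volterra equation
`R z = (1/(2Λ-1)) ∫₀^z [1-(t/z)^(2Λ-1)] (A' t/(2Λ)^(n-1) + g t · R t) dt`, then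
`|R z| ≤ (2‖A'‖₁/(|2Λ-1| |2Λ|^(n-1))) exp(2‖g‖₁/|2Λ-1|)` on `[0,a]`. -/
theorem olver_remainder_uniform_bound
    (Λ : ℂ) (hΛ : 1 / 2 < Λ.re) (a : ℝ) (ha : 0 < a) (n : ℕ) (hn : 1 ≤ n)
    (g A' R : ℝ → ℂ)
    (hg : ContinuousOn g (Set.Icc 0 a)) (hA' : ContinuousOn A' (Set.Icc 0 a))
    (hR : ContinuousOn R (Set.Icc 0 a))
    (heq : ∀ z ∈ Set.Icc (0 : ℝ) a,
      R z = (1 / (2 * Λ - 1)) *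
        ∫ t in (0 : ℝ)..z, (1 - (((t / z : ℝ)) : ℂ) ^ (2 * Λ - 1)) *
          (A' t / (2 * Λ) ^ (n - 1) + g t * R t)) :
    ∀ z ∈ Set.Icc (0 : ℝ) a,
      ‖R z‖ ≤
        2 * (∫ t in (0 : ℝ)..a, ‖A' t‖) /
            (‖2 * Λ - 1‖ * (‖2 * Λ‖) ^ (n - 1)) *
          Real.exp (2 * (∫ t in (0 : ℝ)..a, ‖g t‖) /
            ‖2 * Λ - 1‖) :=
  olver_remainder_uniform_bound_general Λ hΛ a n g A' R hg hA' hR heq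
end

section
/- Second Frobenius solution: let Λ ∈ ℂ with Re(Λ) > 1/2 and 2 - 2Λ not a nonpositive integer. Define d₀ = 1 and d_{k+1} = d_k/((k+1)(k+2-2Λ)), and u(z) = z^{1-2Λ} Σ_{k=0}^∞ d_k z^k for z > 0 (principal power). Then u satisfies z u''(z) + 2Λ u'(z) = u(z) for all z > 0. -/
/-!
Write `u = Σ d_k z^(c+k)` with `c = 1 - 2Λ`. Since `d_{k+1}/d_k → 0` the series may be
differentiated termwise on `(0, ∞)`, and `z u'' + 2Λ u'` becomes
`Σ (c+k)(c-1+2Λ+k) d_k z^(c+k-1)`.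
The `k = 0` term vanishes because `c` is a root of the indicial polynomial `c (c - 1 + 2Λ)`, and
after shifting the index the recurrence `(c+k+1)(k+1) d_{k+1} = d_k` returns `u`.
-/

open Filter Topology Set

def HasInfiniteRadius (e : ℕ → ℂ) : Prop :=
  ∀ r : ℝ, 0 < r → Summable fun k => ‖e k‖ * r ^ k

theorem hasInfiniteRadius_of_succ_eq_div {e p : ℕ → ℂ}
    (hp : Tendsto (fun k => ‖p k‖) atTop atTop) (he : ∀ k, e (k + 1) = e k / p k) :
    HasInfiniteRadius e := by
  intro r hr
  refine summable_of_ratio_norm_eventually_le (r := 1 / 2) (by norm_num) ?_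
  filter_upwards [hp.eventually_ge_atTop (2 * r)] with k hk
  have hpk : 0 < ‖p k‖ := by linarith
  rw [Real.norm_of_nonneg (by positivity), Real.norm_of_nonneg (by positivity), he, norm_div,
    pow_succ, div_mul_eq_mul_div, div_le_iff₀ hpk]
  calc ‖e k‖ * (r ^ k * r) = ‖e k‖ * r ^ k * r := by ring
    _ ≤ ‖e k‖ * r ^ k * (‖p k‖ / 2) := by gcongr; linarith
    _ = 1 / 2 * (‖e k‖ * r ^ k) * ‖p k‖ := by ring

theorem tendsto_norm_natCast_add_atTop (w : ℂ) :
    Tendsto (fun k : ℕ => ‖(k : ℂ) + w‖) atTop atTop := by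
  refine tendsto_atTop_mono (fun k => ?_)
    (tendsto_atTop_add_const_right _ (-‖w‖) tendsto_natCast_atTop_atTop)
  have := norm_sub_le ((k : ℂ) + w) w
  simp only [add_sub_cancel_right, Complex.norm_natCast] at this
  linarith

theorem HasInfiniteRadius.add_natCast_mul {e : ℕ → ℂ} (he : HasInfiniteRadius e) (w : ℂ) :
    HasInfiniteRadius fun k => (w + k) * e k := by
  intro r hr
  refine .of_nonneg_of_le (fun k => by positivity) (fun k => ?_)
    ((he (2 * r) (by positivity)).mul_left (‖w‖ + 1))
  have hk : (k : ℝ) ≤ 2 ^ k := by exact_mod_cast (Nat.lt_two_pow_self (n := k)).le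
  have hone : (1 : ℝ) ≤ 2 ^ k := one_le_pow₀ (by norm_num)
  have hw : ‖w + k‖ ≤ (‖w‖ + 1) * 2 ^ k :=
    calc ‖w + k‖ ≤ ‖w‖ + k := by simpa using norm_add_le w (k : ℂ)
      _ ≤ ‖w‖ * 2 ^ k + 2 ^ k := by gcongr; nlinarith [norm_nonneg w]
      _ = (‖w‖ + 1) * 2 ^ k := by ring
  calc ‖(w + k) * e k‖ * r ^ k = ‖w + k‖ * (‖e k‖ * r ^ k) := by rw [norm_mul]; ring
    _ ≤ (‖w‖ + 1) * 2 ^ k * (‖e k‖ * r ^ k) := by gcongr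
    _ = (‖w‖ + 1) * (‖e k‖ * (2 * r) ^ k) := by rw [mul_pow]; ring

noncomputable def frobeniusSeries (e : ℕ → ℂ) (a : ℂ) (x : ℝ) : ℂ :=
  ∑' k, e k * (x : ℂ) ^ (a + k)

theorem ofReal_cpow_mul_tsum_eq_frobeniusSeries (e : ℕ → ℂ) (a : ℂ) {x : ℝ} (hx : 0 < x) :
    (x : ℂ) ^ a * ∑' k, e k * (x : ℂ) ^ k = frobeniusSeries e a x := by
  rw [frobeniusSeries, ← tsum_mul_left]
  refine tsum_congr fun k => ?_
  rw [Complex.cpow_add _ _ (Complex.ofReal_ne_zero.2 hx.ne'), Complex.cpow_natCast]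
  ring

theorem norm_ofReal_cpow_add_natCast {x : ℝ} (hx : 0 < x) (a : ℂ) (k : ℕ) :
    ‖(x : ℂ) ^ (a + k)‖ = x ^ a.re * x ^ k := by
  rw [Complex.norm_cpow_eq_rpow_re_of_pos hx, Complex.add_re, Complex.natCast_re,
    Real.rpow_add hx, Real.rpow_natCast]

theorem HasInfiniteRadius.summable_frobeniusSeries {e : ℕ → ℂ} (he : HasInfiniteRadius e)
    (a : ℂ) {x : ℝ} (hx : 0 < x) : Summable fun k => e k * (x : ℂ) ^ (a + k) := by
  refine .of_norm (((he x hx).mul_left (x ^ a.re)).congr fun k => ?_)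
  rw [norm_mul, norm_ofReal_cpow_add_natCast hx]; ring

theorem HasInfiniteRadius.hasDerivAt_frobeniusSeries {e : ℕ → ℂ} (he : HasInfiniteRadius e)
    (a : ℂ) {x : ℝ} (hx : 0 < x) :
    HasDerivAt (frobeniusSeries e a) (frobeniusSeries (fun k => (a + k) * e k) (a - 1) x) x := by
  have hpos : ∀ y ∈ Ioo (x / 2) (2 * x), 0 < y := fun y hy => by linarith [hy.1]
  obtain ⟨M, hM⟩ := isCompact_Icc.exists_bound_of_continuousOn
    (s := Icc (x / 2) (2 * x)) (f := fun y : ℝ => y ^ (a - 1).re)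
    (continuousOn_id.rpow_const fun y hy => Or.inl (by simp only [id]; linarith [hy.1]))
  have hxI : x ∈ Ioo (x / 2) (2 * x) := ⟨by linarith, by linarith⟩
  refine hasDerivAt_tsum_of_isPreconnected (g := fun k (y : ℝ) => e k * (y : ℂ) ^ (a + k))
    (g' := fun k (y : ℝ) => (a + k) * e k * (y : ℂ) ^ (a - 1 + k))
    (((he.add_natCast_mul a) (2 * x) (by positivity)).mul_left M) isOpen_Ioo
    isPreconnected_Ioo (fun k y hy => ?_) (fun k y hy => ?_) hxI
    (he.summable_frobeniusSeries a hx) hxI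
  · have hcpow := (Complex.hasStrictDerivAt_cpow_const (c := a + k)
      (Complex.ofReal_mem_slitPlane.2 (hpos y hy))).hasDerivAt.comp_ofReal.const_mul (e k)
    rw [show a + k - 1 = a - 1 + k by ring] at hcpow
    exact hcpow.congr_deriv (by ring)
  · have hy0 := hpos y hy
    have hMy : y ^ (a - 1).re ≤ M := (Real.le_norm_self _).trans (hM y (Ioo_subset_Icc_self hy))
    rw [norm_mul, norm_ofReal_cpow_add_natCast hy0]
    calc ‖(a + k) * e k‖ * (y ^ (a - 1).re * y ^ k)
        ≤ ‖(a + k) * e k‖ * (M * (2 * x) ^ k) := by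
          gcongr
          · exact (Real.rpow_nonneg hy0.le _).trans hMy
          · exact hy.2.le
      _ = M * (‖(a + k) * e k‖ * (2 * x) ^ k) := by ring

theorem HasInfiniteRadius.frobeniusSeries_deriv_eqOn {e : ℕ → ℂ} (he : HasInfiniteRadius e)
    (a : ℂ) :
    EqOn (deriv (frobeniusSeries e a)) (frobeniusSeries (fun k => (a + k) * e k) (a - 1))
      (Ioi 0) :=
  fun _ hx => (he.hasDerivAt_frobeniusSeries a hx).deriv

theorem ofReal_mul_frobeniusSeries (e : ℕ → ℂ) (a : ℂ) {x : ℝ} (hx : 0 < x) :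
    (x : ℂ) * frobeniusSeries e a x = frobeniusSeries e (a + 1) x := by
  rw [frobeniusSeries, frobeniusSeries, ← tsum_mul_left]
  refine tsum_congr fun k => ?_
  rw [add_right_comm, Complex.cpow_add (a + k) 1 (Complex.ofReal_ne_zero.2 hx.ne'),
    Complex.cpow_one]
  ring

theorem frobeniusSeries_eq_shift {e : ℕ → ℂ} (h0 : e 0 = 0) (a : ℂ) (x : ℝ) :
    frobeniusSeries e a x = frobeniusSeries (fun k => e (k + 1)) (a + 1) x := by
  rw [frobeniusSeries, frobeniusSeries, ← Nat.succ_injective.tsum_eq]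
  · refine tsum_congr fun k => ?_
    rw [Nat.succ_eq_add_one, Nat.cast_add_one, add_assoc, add_comm (1 : ℂ)]
  · rintro (_ | k) hk
    · simp [h0] at hk
    · exact ⟨k, rfl⟩

theorem HasInfiniteRadius.frobeniusSeries_ode {e : ℕ → ℂ} (he : HasInfiniteRadius e)
    {a b : ℂ} (hindicial : a * (a - 1 + b) = 0)
    (hrec : ∀ k : ℕ, (a + k + 1) * (a + k + b) * e (k + 1) = e k) {x : ℝ} (hx : 0 < x) :
    x * deriv (deriv (frobeniusSeries e a)) x + b * deriv (frobeniusSeries e a) x =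
      frobeniusSeries e a x := by
  set e₁ : ℕ → ℂ := fun k => (a + k) * e k
  have he₁ : HasInfiniteRadius e₁ := he.add_natCast_mul a
  have hderiv₂ : deriv (deriv (frobeniusSeries e a)) x =
      frobeniusSeries (fun k => (a - 1 + k) * e₁ k) (a - 1 - 1) x := by
    rw [((he.frobeniusSeries_deriv_eqOn a).eventuallyEq_of_mem (Ioi_mem_nhds hx)).deriv_eq]
    exact (he₁.hasDerivAt_frobeniusSeries (a - 1) hx).deriv
  have hcombine : x * frobeniusSeries (fun k => (a - 1 + k) * e₁ k) (a - 1 - 1) x +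
      b * frobeniusSeries e₁ (a - 1) x =
        frobeniusSeries (fun k => (a - 1 + b + k) * e₁ k) (a - 1) x := by
    rw [ofReal_mul_frobeniusSeries _ _ hx, sub_add_cancel, frobeniusSeries, frobeniusSeries,
      frobeniusSeries, ← tsum_mul_left,
      ← ((he₁.add_natCast_mul (a - 1)).summable_frobeniusSeries (a - 1) hx).tsum_add
        ((he₁.summable_frobeniusSeries (a - 1) hx).mul_left b)]
    exact tsum_congr fun k => by ring
  have hconstant : (a - 1 + b + ((0 : ℕ) : ℂ)) * e₁ 0 = 0 := by
    simp only [e₁, Nat.cast_zero, add_zero]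
    linear_combination e 0 * hindicial
  rw [hderiv₂, he.frobeniusSeries_deriv_eqOn a hx, hcombine,
    frobeniusSeries_eq_shift hconstant, sub_add_cancel]
  refine tsum_congr fun k => ?_
  rw [← hrec k]
  simp only [e₁]
  push_cast
  ring

theorem second_frobenius_solution_general
    (Λ : ℂ) (hΛ' : ∀ m : ℕ, 2 - 2 * Λ ≠ -(m : ℂ))
    (d : ℕ → ℂ)
    (hd : ∀ k : ℕ, d (k + 1) = d k / (((k : ℂ) + 1) * ((k : ℂ) + 2 - 2 * Λ)))
    (u : ℝ → ℂ)
    (hu : ∀ z : ℝ, 0 < z →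
      u z = (z : ℂ) ^ (1 - 2 * Λ) * ∑' k : ℕ, d k * (z : ℂ) ^ k) :
    ∀ z : ℝ, 0 < z →
      (z : ℂ) * deriv (deriv u) z + 2 * Λ * deriv u z = u z := by
  intro z hz
  have hrad : HasInfiniteRadius d := by
    refine hasInfiniteRadius_of_succ_eq_div ?_ hd
    simp_rw [norm_mul, add_sub_assoc]
    exact (tendsto_norm_natCast_add_atTop 1).atTop_mul_atTop₀ (tendsto_norm_natCast_add_atTop _)
  have hrec (k : ℕ) : (1 - 2 * Λ + k + 1) * (1 - 2 * Λ + k + 2 * Λ) * d (k + 1) = d k := by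
    have hk : (k : ℂ) + 2 - 2 * Λ ≠ 0 := fun h => hΛ' k (by linear_combination h)
    rw [hd k]
    field_simp
    ring
  have hu_eq : u =ᶠ[𝓝 z] frobeniusSeries d (1 - 2 * Λ) :=
    eventually_of_mem (Ioi_mem_nhds hz) fun y hy =>
      (hu y hy).trans (ofReal_cpow_mul_tsum_eq_frobeniusSeries d _ hy)
  rw [hu_eq.deriv.deriv_eq, hu_eq.deriv_eq, hu_eq.eq_of_nhds]
  exact hrad.frobeniusSeries_ode (by ring) hrec hz

/-- Second Frobenius solution: for `Re Λ > 1/2` with `2 - 2Λ` not a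
nonpositive integer, `d₀ = 1`, `d_{k+1} = d_k/((k+1)(k+2-2Λ))`, the function
`u z = z^(1-2Λ) Σ d_k z^k` (principal power, `z > 0`) satisfies
`z u'' + 2Λ u' = u` for all `z > 0`. -/
theorem second_frobenius_solution
    (Λ : ℂ) (hΛ : 1 / 2 < Λ.re) (hΛ' : ∀ m : ℕ, 2 - 2 * Λ ≠ -(m : ℂ))
    (d : ℕ → ℂ) (hd0 : d 0 = 1)
    (hd : ∀ k : ℕ, d (k + 1) = d k / (((k : ℂ) + 1) * ((k : ℂ) + 2 - 2 * Λ)))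
    (u : ℝ → ℂ)
    (hu : ∀ z : ℝ, 0 < z →
      u z = (z : ℂ) ^ (1 - 2 * Λ) * ∑' k : ℕ, d k * (z : ℂ) ^ k) :
    ∀ z : ℝ, 0 < z →
      (z : ℂ) * deriv (deriv u) z + 2 * Λ * deriv u z = u z :=
  second_frobenius_solution_general Λ hΛ' d hd u hu
end
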